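/- Let F : ℝⁿ → ℝ be a differentiable convex function whose gradient has unit norm everywhere: ‖∇F(x)‖ = 1 for all x. Fix p and let γ(t) = p + t∇F(p). Then F(γ(t)) = F(p) + t for all t ∈ ℝ, and ∇F(γ(t)) = ∇F(p) for all t. -/

import Mathlib

/-!
Convexity gives the gradient inequality `F x ≥ F p + ⟪g p, x - p⟫`. If two gradients `g p ≠ g q`
existed, their midpoint `y` would satisfy `‖y‖ < 1`, and `F - ⟪y, ·⟫`, an average of two functions
bounded below, would be bounded below. A function bounded below on a finite-dimensional space has
points of arbitrarily small gradient (minimize it plus `ε/2 ‖x‖²`), so some `‖g z - y‖ < 1 - ‖y‖`,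
contradicting `‖g z‖ = 1`. Hence `g` is constant, `F` is affine, and the claim is immediate.
-/

open Set Filter InnerProductSpace

theorem Continuous.exists_forall_le_add_mul_norm_sq {V : Type*} [NormedAddCommGroup V]
    [ProperSpace V] {Φ : V → ℝ} (hΦ : Continuous Φ) {m : ℝ} (hm : ∀ x, m ≤ Φ x) {c : ℝ}
    (hc : 0 < c) : ∃ z, ∀ x, Φ z + c * ‖z‖ ^ 2 ≤ Φ x + c * ‖x‖ ^ 2 := by
  refine (hΦ.add (continuous_const.mul (continuous_norm.pow 2))).exists_forall_le ?_
  refine tendsto_atTop_mono (fun x => add_le_add_left (hm x) _) ?_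
  refine tendsto_atTop_add_const_left _ m ?_
  exact ((tendsto_pow_atTop two_ne_zero).comp tendsto_norm_cocompact_atTop).const_mul_atTop hc

variable {E : Type*} [NormedAddCommGroup E] [InnerProductSpace ℝ E] [CompleteSpace E]

theorem ConvexOn.add_inner_gradient_le {s : Set E} {F : E → ℝ} (hF : ConvexOn ℝ s F)
    {G x y : E} (hx : x ∈ s) (hy : y ∈ s) (hG : HasGradientAt F G x) :
    F x + ⟪G, y - x⟫_ℝ ≤ F y := by
  have hline : ConvexOn ℝ (AffineMap.lineMap x y ⁻¹' s) (F ∘ AffineMap.lineMap (k := ℝ) x y) :=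
    hF.comp_affineMap _
  have hderiv : HasDerivAt (F ∘ AffineMap.lineMap (k := ℝ) x y) ⟪G, y - x⟫_ℝ 0 := by
    have hFx : HasFDerivAt F (toDual ℝ E G) (AffineMap.lineMap (k := ℝ) x y 0) := by
      simpa using hG.hasFDerivAt
    exact hFx.comp_hasDerivAt 0 AffineMap.hasDerivAt_lineMap
  have := hline.le_slope_of_hasDerivAt (by simpa using hx) (by simpa using hy) zero_lt_one hderiv
  simp only [slope_def_field, Function.comp_apply, AffineMap.lineMap_apply_zero,
    AffineMap.lineMap_apply_one, sub_zero, div_one] at this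
  linarith

theorem ConvexOn.eq_add_inner_of_gradient_eq {s : Set E} {F : E → ℝ} {g : E → E}
    (hF : ConvexOn ℝ s F) (hgrad : ∀ x ∈ s, HasGradientAt F (g x) x) {p x : E} (hp : p ∈ s)
    (hx : x ∈ s) (hgx : g x = g p) : F x = F p + ⟪g p, x - p⟫_ℝ := by
  have h₁ := hF.add_inner_gradient_le hp hx (hgrad p hp)
  have h₂ := hF.add_inner_gradient_le hx hp (hgrad x hx)
  rw [hgx, ← neg_sub x p, inner_neg_right] at h₂
  linarith

variable [FiniteDimensional ℝ E]

theorem exists_norm_gradient_lt {Φ : E → ℝ} {φ : E → E} (hΦ : ∀ x, HasGradientAt Φ (φ x) x)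
    (hbdd : BddBelow (range Φ)) {δ : ℝ} (hδ : 0 < δ) : ∃ z, ‖φ z‖ < δ := by
  obtain ⟨m, hm⟩ := hbdd
  replace hm : ∀ x, m ≤ Φ x := fun x => hm (mem_range_self x)
  set K := Φ 0 - m
  have hK : 0 ≤ K := sub_nonneg.2 (hm 0)
  -- chosen so that `(ε ‖z‖)² ≤ 2 ε K < δ²` once `ε / 2 * ‖z‖ ^ 2 ≤ K`
  set ε := δ ^ 2 / (4 * (K + 1))
  have hε : 0 < ε := by positivity
  obtain ⟨z, hz⟩ := (continuous_iff_continuousAt.2 fun x => (hΦ x).continuousAt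
    ).exists_forall_le_add_mul_norm_sq hm (half_pos hε)
  have hcrit : φ z + ε • z = 0 := by
    have hmin : IsLocalMin (fun x => Φ x + ε / 2 * ‖x‖ ^ 2) z := Eventually.of_forall hz
    have hzero := hmin.hasFDerivAt_eq_zero
      ((hΦ z).hasFDerivAt.add ((hasStrictFDerivAt_norm_sq z).hasFDerivAt.const_mul (ε / 2)))
    have := congrArg (fun L => L (φ z + ε • z)) hzero
    simp only [add_apply, smul_apply, toDual_apply_apply,
      innerSL_apply_apply, zero_apply, nsmul_eq_mul, smul_eq_mul] at this
    rw [← inner_self_eq_zero (𝕜 := ℝ), inner_add_left, real_inner_smul_left]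
    linarith
  have hz_bound : ε / 2 * ‖z‖ ^ 2 ≤ K := by
    have := hz 0
    simp only [norm_zero] at this
    linarith [hm z]
  have hφz : ‖φ z‖ = ε * ‖z‖ := by
    rw [eq_neg_of_add_eq_zero_left hcrit, norm_neg, norm_smul, Real.norm_of_nonneg hε.le]
  have hεK : 2 * ε * (K + 1) = δ ^ 2 / 2 := by
    simp only [ε]; field_simp; ring
  refine ⟨z, lt_of_pow_lt_pow_left₀ 2 hδ.le ?_⟩
  rw [hφz]
  nlinarith [sq_nonneg ‖z‖]

theorem ConvexOn.gradient_eq_of_norm_eq_one {F : E → ℝ} {g : E → E} (hF : ConvexOn ℝ univ F)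
    (hgrad : ∀ x, HasGradientAt F (g x) x) (hunit : ∀ x, ‖g x‖ = 1) (p q : E) : g q = g p := by
  by_contra hne
  set y : E := (1 / 2 : ℝ) • (g p + g q)
  have hy : ‖y‖ < 1 := by
    simpa only [hunit p] using (norm_midpoint_lt_iff (hunit p ▸ hunit q).symm).2 (Ne.symm hne)
  have hbdd : BddBelow (range fun x => F x - ⟪y, x⟫_ℝ) := by
    refine ⟨(F p - ⟪g p, p⟫_ℝ + (F q - ⟪g q, q⟫_ℝ)) / 2, forall_mem_range.2 fun x => ?_⟩
    have hpx := hF.add_inner_gradient_le (mem_univ p) (mem_univ x) (hgrad p)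
    have hqx := hF.add_inner_gradient_le (mem_univ q) (mem_univ x) (hgrad q)
    simp only [y, inner_sub_right, real_inner_smul_left, inner_add_left] at hpx hqx ⊢
    linarith
  have hgrad_sub : ∀ x, HasGradientAt (fun x => F x - ⟪y, x⟫_ℝ) (g x - y) x := by
    intro x
    rw [hasGradientAt_iff_hasFDerivAt, map_sub]
    exact (hgrad x).hasFDerivAt.sub (innerSL ℝ y).hasFDerivAt
  obtain ⟨z, hz⟩ := exists_norm_gradient_lt hgrad_sub hbdd (sub_pos.2 hy)
  have hgz : ‖g z‖ < 1 := calc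
    ‖g z‖ ≤ ‖g z - y‖ + ‖y‖ := norm_le_norm_sub_add _ _
    _ < 1 := by linarith
  exact hgz.ne (hunit z)

/-- A differentiable convex function with unit-norm gradient grows linearly along the
gradient line, and the gradient is constant along that line. -/
theorem stmt_6 (n : ℕ) (F : EuclideanSpace ℝ (Fin n) → ℝ)
    (g : EuclideanSpace ℝ (Fin n) → EuclideanSpace ℝ (Fin n))
    (hF : ConvexOn ℝ Set.univ F)
    (hgrad : ∀ x, HasGradientAt F (g x) x)
    (hunit : ∀ x, ‖g x‖ = 1)
    (p : EuclideanSpace ℝ (Fin n)) :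
    ∀ t : ℝ, F (p + t • g p) = F p + t ∧ g (p + t • g p) = g p := by
  intro t
  have hg : g (p + t • g p) = g p := hF.gradient_eq_of_norm_eq_one hgrad hunit p _
  refine ⟨?_, hg⟩
  rw [hF.eq_add_inner_of_gradient_eq (fun x _ => hgrad x) (mem_univ p) (mem_univ _) hg,
    add_sub_cancel_left, real_inner_smul_right, real_inner_self_eq_norm_sq, hunit p]
  ring
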